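/- The subgroup Γ_B of SL(2,ℝ) is an infinitely generated discrete subgroup: Γ_B with the topology induced from SL(2,ℝ) is a discrete topological space, and Γ_B is not finitely generated. -/

import Mathlib

/-!
A generator `N(β, β', r)` satisfies `|N z - β'| · |z - β| = r²`, so it maps the outside of the
disk `|z - β| ≤ r` into the disk `|z - β'| < r`. For `Γ_B` these `2 · #generators` disks have
disjoint interiors: the centres `β` sit in the gaps of the middle-thirds construction on `[1, 2]`,
spaced out inside each gap, and the centres `β'` are their mirror images in `[-2, -1]`. By
ping-pong, every reduced nonempty word moves `I` into one of the disks, all of radius at most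
`1/12`; hence `Im (g • I) < 1/12` for every `g ≠ 1` in `Γ_B`. This gives discreteness, and
shows that `Γ_B` is free on its infinitely many generators, so it is not finitely generated.
-/

open UpperHalfPlane MatrixGroups

noncomputable section

/-- `s k = Σᵢ 2·tᵢ·3ⁱ` where `k = Σᵢ tᵢ·2ⁱ` is the binary expansion of `k`;
equivalently `s 0 = 0`, `s (2j) = 3·(s j)`, `s (2j+1) = 3·(s j) + 2`. -/
def s : ℕ → ℕ
  | 0 => 0
  | k + 1 =>
    if (k + 1) % 2 = 0 then 3 * s ((k + 1) / 2)
    else 3 * s ((k + 1) / 2) + 2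
decreasing_by all_goals (simp_wf; omega)

/-- Left endpoint of the middle third removed at stage `n` from the `k`-th interval of
stage `n−1` of the middle-thirds construction on `[1,2]`. -/
def pB (n k : ℕ) : ℝ := 1 + (3 * s k + 1) / 3 ^ n

/-- Right endpoint of the middle third removed at stage `n` from the `k`-th interval of
stage `n−1` of the middle-thirds construction on `[1,2]`. -/
def qB (n k : ℕ) : ℝ := 1 + (3 * s k + 2) / 3 ^ n

/-- `α(n,k)`, the midpoint of the removed middle third. -/
def alphaB (n k : ℕ) : ℝ := (pB n k + qB n k) / 2

/-- `q̃(n,k) := q(n,k) − 1/(6·3^n)`. -/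
def qtB (n k : ℕ) : ℝ := qB n k - 1 / (6 * 3 ^ n)

/-- `ρ(n) := 1/(12·3^n)`. -/
def rhoB (n : ℕ) : ℝ := 1 / (12 * 3 ^ n)

/-- `σ(n,m) := 1/(60·3^n·2^m)`. -/
def sigB (n m : ℕ) : ℝ := 1 / (60 * 3 ^ n * 2 ^ m)

lemma rhoB_ne (n : ℕ) : rhoB n ≠ 0 := by unfold rhoB; positivity

lemma sigB_ne (n m : ℕ) : sigB n m ≠ 0 := by unfold sigB; positivity

/-- `N(β,β',r)` is the element of `SL(2,ℝ)` whose Möbius transformation has isometric circle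
the half-circle of radius `r` centered at `β`, mapped onto the half-circle of radius `r`
centered at `β'`. -/
def Nmat (β β' r : ℝ) (hr : r ≠ 0) : SL(2, ℝ) :=
  ⟨!![β' / r, -(β * β' + r ^ 2) / r; 1 / r, -β / r], by
    rw [Matrix.det_fin_two_of]; field_simp; ring⟩

/-- The subgroup `Γ_B` of `SL(2,ℝ)` generated by the Möbius transformations of the Blooming
Cantor tree construction. -/
def ΓB : Subgroup SL(2, ℝ) :=
  Subgroup.closure
    ({g | ∃ n k : ℕ, 1 ≤ n ∧ k < 2 ^ (n - 1) ∧
        g = Nmat (alphaB n k) (-(alphaB n k)) (rhoB n) (rhoB_ne n)} ∪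
      {g | ∃ n m k : ℕ, 1 ≤ n ∧ 1 ≤ m ∧ k < 2 ^ (n - 1) ∧
        (g = Nmat (pB n k + 17 * sigB n m) (-(pB n k + 13 * sigB n m)) (sigB n m)
            (sigB_ne n m) ∨
         g = Nmat (pB n k + 13 * sigB n m) (-(pB n k + 17 * sigB n m)) (sigB n m)
            (sigB_ne n m) ∨
         g = Nmat (qtB n k - 13 * sigB n m) (-(qtB n k - 17 * sigB n m)) (sigB n m)
            (sigB_ne n m) ∨
         g = Nmat (qtB n k - 17 * sigB n m) (-(qtB n k - 13 * sigB n m)) (sigB n m)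
            (sigB_ne n m))})

/-- The topology on `SL(2,ℝ)` induced from the matrix space. -/
instance : TopologicalSpace SL(2, ℝ) :=
  inferInstanceAs (TopologicalSpace {A : Matrix (Fin 2) (Fin 2) ℝ // A.det = 1})

lemma im_le_norm_coe_sub_ofReal (z : ℍ) (t : ℝ) : z.im ≤ ‖(z : ℂ) - t‖ := by
  simpa using (Complex.abs_im_le_norm ((z : ℂ) - t)).trans' (le_abs_self _)

lemma coe_sub_ofReal_ne_zero (z : ℍ) (t : ℝ) : (z : ℂ) - t ≠ 0 :=
  norm_pos_iff.mp ((z.im_pos).trans_le (im_le_norm_coe_sub_ofReal z t))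

lemma coe_Nmat_smul_sub (β β' r : ℝ) (hr : r ≠ 0) (z : ℍ) :
    ((Nmat β β' r hr • z : ℍ) : ℂ) - β' = -(r : ℂ) ^ 2 / (z - β) := by
  have hz := coe_sub_ofReal_ne_zero z β
  have hr' : (r : ℂ) ≠ 0 := by exact_mod_cast hr
  rw [coe_specialLinearGroup_apply]
  simp only [Nmat, Algebra.algebraMap_self, RingHom.id_apply, Matrix.of_apply, Matrix.cons_val',
    Matrix.cons_val_zero, Matrix.cons_val_one, Matrix.empty_val', Matrix.cons_val_fin_one,
    Complex.ofReal_div, Complex.ofReal_neg, Complex.ofReal_add, Complex.ofReal_mul,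
    Complex.ofReal_pow, Complex.ofReal_one]
  rw [show (β' / r * z + -(β * β' + r ^ 2) / r : ℂ) = (β' * (z - β) - r ^ 2) / r by ring,
    show (1 / r * z + -β / r : ℂ) = (z - β) / r by ring, div_div_div_cancel_right₀ hr']
  field_simp
  ring

lemma norm_Nmat_smul_sub_mul_norm_sub (β β' r : ℝ) (hr : r ≠ 0) (z : ℍ) :
    ‖((Nmat β β' r hr • z : ℍ) : ℂ) - β'‖ * ‖(z : ℂ) - β‖ = r ^ 2 := by
  rw [coe_Nmat_smul_sub, norm_div,
    div_mul_cancel₀ _ (norm_ne_zero_iff.mpr (coe_sub_ofReal_ne_zero z β))]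
  simp

lemma discreteTopology_of_im_smul_I_le {H : Subgroup SL(2, ℝ)} {R : ℝ} (hR : R < 1)
    (h : ∀ g ∈ H, g ≠ 1 → (g • I).im ≤ R) : DiscreteTopology H := by
  -- instance search does not see through the `TopologicalSpace` instance above
  have : IsTopologicalGroup SL(2, ℝ) := Matrix.SpecialLinearGroup.topologicalGroup
  apply discreteTopology_of_isOpen_singleton_one
  have hone : ({1} : Set H) = (fun g : H => ((g : SL(2, ℝ)) • I).im) ⁻¹' Set.Ioi R := by
    ext ⟨g, hg⟩
    simp only [Set.mem_singleton_iff, Set.mem_preimage, Set.mem_Ioi, Subgroup.mk_eq_one]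
    refine ⟨fun h1 => by simpa [h1] using hR, fun hlt => ?_⟩
    by_contra hne
    exact (h g hg hne).not_gt hlt
  rw [hone]
  exact isOpen_Ioi.preimage (UpperHalfPlane.continuous_im.comp
    (UpperHalfPlane.isProperMap_smul_I.continuous.comp continuous_subtype_val))

theorem FreeGroup.not_fg_of_infinite (α : Type*) [Infinite α] : ¬ Group.FG (FreeGroup α) := by
  intro hfg
  have hab : Group.FG (Abelianization (FreeGroup α)) :=
    Group.fg_of_surjective (f := Abelianization.of) (QuotientGroup.mk'_surjective _)
  have hfin : Module.Finite ℤ (α →₀ ℤ) := Module.Finite.iff_addGroup_fg.mpr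
    (AddGroup.fg_of_surjective (f := (FreeAbelianGroup.equivFinsupp α).toAddMonoidHom)
      (hG := GroupFG.iff_add_fg.mp hab) (FreeAbelianGroup.equivFinsupp α).surjective)
  rcases Module.finite_finsupp_iff.mp hfin with h | h | ⟨-, h⟩
  · exact not_isEmpty_of_nonempty α h
  · exact not_subsingleton ℤ h
  · exact not_finite α

theorem not_exists_finite_closure_eq_range {G α : Type*} [Group G] [Infinite α]
    {φ : FreeGroup α →* G} (hφ : Function.Injective φ) :
    ¬ ∃ F : Set G, F.Finite ∧ Subgroup.closure F = φ.range := by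
  rintro ⟨F, hF, hcl⟩
  have : Group.FG φ.range :=
    (Group.fg_iff_subgroup_fg _).mpr ((Subgroup.fg_iff _).mpr ⟨F, hcl, hF⟩)
  exact FreeGroup.not_fg_of_infinite α (Group.fg_of_surjective
    (f := (MonoidHom.ofInjective hφ).symm.toMonoidHom) (MulEquiv.surjective _))

section Schottky

variable {ι : Type*}

/-- A Schottky family: the letter `(i, true)` of a word stands for `a i` and `(i, false)` for
`(a i)⁻¹`; `c x` is the centre of the isometric circle of the letter `x`, of radius `r x.1`, and
the half-disks bounded by these `2 |ι|` circles have disjoint interiors. -/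
structure IsSchottky (a : ι → SL(2, ℝ)) (c : ι × Bool → ℝ) (r : ι → ℝ) : Prop where
  radius_pos : ∀ i, 0 < r i
  norm_smul_sub_mul_norm_sub : ∀ i (z : ℍ),
    ‖((a i • z : ℍ) : ℂ) - c (i, false)‖ * ‖(z : ℂ) - c (i, true)‖ = r i ^ 2
  radius_add_radius_le : Pairwise fun x y : ι × Bool => r x.1 + r y.1 ≤ |c x - c y|

namespace IsSchottky

variable {a : ι → SL(2, ℝ)} {c : ι × Bool → ℝ} {r : ι → ℝ}

lemma norm_letter_smul_sub_mul_norm_sub (h : IsSchottky a c r) (x : ι × Bool) (z : ℍ) :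
    ‖((FreeGroup.lift a (FreeGroup.mk [x]) • z : ℍ) : ℂ) - c (x.1, !x.2)‖ * ‖(z : ℂ) - c x‖ =
      r x.1 ^ 2 := by
  obtain ⟨i, _ | _⟩ := x
  · simpa [FreeGroup.lift_mk, mul_comm] using h.norm_smul_sub_mul_norm_sub i ((a i)⁻¹ • z)
  · simpa [FreeGroup.lift_mk] using h.norm_smul_sub_mul_norm_sub i z

lemma norm_letter_smul_sub_lt (h : IsSchottky a c r) (x : ι × Bool) {z : ℍ}
    (hz : r x.1 < ‖(z : ℂ) - c x‖) :
    ‖((FreeGroup.lift a (FreeGroup.mk [x]) • z : ℍ) : ℂ) - c (x.1, !x.2)‖ < r x.1 := by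
  have hr := h.radius_pos x.1
  have hxz := h.norm_letter_smul_sub_mul_norm_sub x z
  refine lt_of_mul_lt_mul_right (a := ‖(z : ℂ) - c x‖) ?_ (norm_nonneg _)
  rw [hxz, sq]
  exact mul_lt_mul_of_pos_left hz hr

lemma norm_lift_mk_smul_I_sub_lt (h : IsSchottky a c r) (hr : ∀ i, r i < 1)
    (L : List (ι × Bool)) (x : ι × Bool) (hL : FreeGroup.IsReduced (x :: L)) :
    ‖((FreeGroup.lift a (FreeGroup.mk (x :: L)) • I : ℍ) : ℂ) - c (x.1, !x.2)‖ < r x.1 := by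
  induction L generalizing x with
  | nil =>
    exact h.norm_letter_smul_sub_lt x ((hr x.1).trans_le (by
      simpa using im_le_norm_coe_sub_ofReal I (c x)))
  | cons y L ih =>
    rw [FreeGroup.isReduced_cons_cons] at hL
    have hy := ih y hL.2
    -- the rest of the word puts `I` in the disk of `y⁻¹`, which by reducedness is not `x`'s
    have hsep := h.radius_add_radius_le (i := x) (j := (y.1, !y.2)) fun hxy => by
      simp [hxy] at hL
    rw [← List.singleton_append, ← FreeGroup.mul_mk, map_mul, mul_smul]
    apply h.norm_letter_smul_sub_lt
    set z := FreeGroup.lift a (FreeGroup.mk (y :: L)) • I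
    have htri : ‖((c x - c (y.1, !y.2) : ℝ) : ℂ)‖ ≤
        ‖(z : ℂ) - c x‖ + ‖(z : ℂ) - c (y.1, !y.2)‖ := by
      simpa [norm_sub_rev (z : ℂ) (c x)] using
        norm_sub_le_norm_sub_add_norm_sub (c x : ℂ) z (c (y.1, !y.2))
    rw [Complex.norm_real, Real.norm_eq_abs] at htri
    linarith

lemma exists_im_lift_smul_I_lt (h : IsSchottky a c r) (hr : ∀ i, r i < 1) {w : FreeGroup ι}
    (hw : w ≠ 1) :
    ∃ i, (FreeGroup.lift a w • I).im < r i := by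
  classical
  obtain ⟨x, L, hxL⟩ : ∃ x L, w.toWord = x :: L :=
    List.exists_cons_of_ne_nil (mt FreeGroup.toWord_eq_nil_iff.mp hw)
  have hping := h.norm_lift_mk_smul_I_sub_lt hr L x (hxL ▸ FreeGroup.isReduced_toWord)
  rw [← hxL, FreeGroup.mk_toWord] at hping
  exact ⟨x.1, (im_le_norm_coe_sub_ofReal _ _).trans_lt hping⟩

lemma lift_injective (h : IsSchottky a c r) (hr : ∀ i, r i < 1) :
    Function.Injective (FreeGroup.lift a) := by
  refine (injective_iff_map_eq_one _).mpr fun w hw => ?_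
  by_contra hne
  obtain ⟨i, hi⟩ := h.exists_im_lift_smul_I_lt hr hne
  rw [hw, one_smul, I_im] at hi
  exact (hr i).not_gt hi

lemma discreteTopology_closure_range (h : IsSchottky a c r) {R : ℝ} (hrR : ∀ i, r i ≤ R)
    (hR : R < 1) :
    DiscreteTopology (Subgroup.closure (Set.range a)) := by
  refine discreteTopology_of_im_smul_I_le hR fun g hg hg1 => ?_
  rw [← FreeGroup.range_lift_eq_closure] at hg
  obtain ⟨w, rfl⟩ := hg
  obtain ⟨i, hi⟩ := h.exists_im_lift_smul_I_lt (fun i => (hrR i).trans_lt hR)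
    fun hw : w = 1 => hg1 (by rw [hw, map_one])
  exact hi.le.trans (hrR i)

lemma not_exists_finite_closure_eq (h : IsSchottky a c r) [Infinite ι] (hr : ∀ i, r i < 1) :
    ¬ ∃ F : Set SL(2, ℝ), F.Finite ∧ Subgroup.closure F = Subgroup.closure (Set.range a) := by
  rw [← FreeGroup.range_lift_eq_closure]
  exact not_exists_finite_closure_eq_range (h.lift_injective hr)

end IsSchottky

end Schottky

lemma s_two_mul (j : ℕ) : s (2 * j) = 3 * s j := by
  rcases j with _ | j
  · simp [s]
  · rw [show 2 * (j + 1) = (2 * j + 1) + 1 by ring, s, if_pos (by omega),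
      show (2 * j + 1 + 1) / 2 = j + 1 by omega]

lemma s_two_mul_add_one (j : ℕ) : s (2 * j + 1) = 3 * s j + 2 := by
  rw [s, if_neg (by omega), show (2 * j + 1) / 2 = j by omega]

lemma s_eq_or (k : ℕ) : s k = 3 * s (k / 2) ∨ s k = 3 * s (k / 2) + 2 := by
  obtain ⟨j, rfl | rfl⟩ := Nat.even_or_odd' k
  · left; rw [s_two_mul, Nat.mul_div_cancel_left j two_pos]
  · right; rw [s_two_mul_add_one, show (2 * j + 1) / 2 = j by omega]

lemma s_strictMono : StrictMono s := by
  refine strictMono_nat_of_lt_succ fun k => ?_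
  induction k using Nat.strong_induction_on with
  | _ k ih =>
    obtain ⟨j, rfl | rfl⟩ := Nat.even_or_odd' k
    · rw [s_two_mul, s_two_mul_add_one]; omega
    · rcases j.eq_zero_or_pos with rfl | hj
      · simp [s]
      rw [s_two_mul_add_one, show 2 * j + 1 + 1 = 2 * (j + 1) by ring, s_two_mul]
      have := ih j (by omega)
      omega

/-- The `k`-th interval `[s k, s k + 1] / 3 ^ j` of stage `j` of the middle-thirds construction
lies in its `(k / 2 ^ d)`-th interval of stage `j - d`. -/
lemma s_div_two_pow_bounds (d k : ℕ) :
    3 ^ d * s (k / 2 ^ d) ≤ s k ∧ s k < 3 ^ d * (s (k / 2 ^ d) + 1) := by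
  induction d generalizing k with
  | zero => simp
  | succ d ih =>
    obtain ⟨h₁, h₂⟩ := ih (k / 2)
    rw [Nat.div_div_eq_div_mul, ← pow_succ'] at h₁ h₂
    rw [pow_succ']
    rcases s_eq_or k with h | h <;> constructor <;> nlinarith

/-- The `k`-th interval of stage `j` avoids the middle third of the `(k / 2 ^ (d + 1))`-th
interval of stage `j - d - 1`. -/
lemma s_avoids_middle_third (d k : ℕ) :
    s k + 1 ≤ 3 ^ d * (3 * s (k / 2 ^ (d + 1)) + 1) ∨
      3 ^ d * (3 * s (k / 2 ^ (d + 1)) + 2) ≤ s k := by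
  obtain ⟨h₁, h₂⟩ := s_div_two_pow_bounds d k
  rw [pow_succ, ← Nat.div_div_eq_div_mul]
  rcases s_eq_or (k / 2 ^ d) with h | h <;> rw [h] at h₁ h₂
  · left; nlinarith
  · right; linarith

lemma removed_middle_thirds_disjoint_nat (d k k' : ℕ) (h : d ≠ 0 ∨ k ≠ k') :
    (3 * s k + 2) * 3 ^ d ≤ 3 * s k' + 1 ∨ 3 * s k' + 2 ≤ (3 * s k + 1) * 3 ^ d := by
  rcases d with _ | d
  · have := s_strictMono.injective.ne (h.resolve_left (by simp))
    omega
  obtain ⟨h₁, h₂⟩ := s_div_two_pow_bounds (d + 1) k'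
  rcases lt_trichotomy (s (k' / 2 ^ (d + 1))) (s k) with hlt | heq | hgt
  · right; nlinarith
  · rcases s_avoids_middle_third d k' with h' | h' <;> rw [heq] at h' <;> rw [pow_succ]
    · right; nlinarith
    · left; nlinarith
  · left; nlinarith

lemma qB_le_pB_or_qB_le_pB {n k n' k' : ℕ} (h : (n, k) ≠ (n', k')) :
    qB n k ≤ pB n' k' ∨ qB n' k' ≤ pB n k := by
  wlog hn : n ≤ n' generalizing n k n' k'
  · exact (this (Ne.symm h) (by omega)).symm
  obtain ⟨d, rfl⟩ := Nat.exists_eq_add_of_le hn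
  have hd : d ≠ 0 ∨ k ≠ k' := by
    by_contra! hd
    exact h (by rw [hd.1, hd.2, add_zero])
  have rescale : ∀ A : ℕ, (A : ℝ) / 3 ^ n = (A * 3 ^ d : ℕ) / 3 ^ (n + d) := by
    intro A; push_cast; rw [pow_add]; field_simp
  have hp : pB n k = 1 + ((3 * s k + 1 : ℕ) : ℝ) / 3 ^ n := by unfold pB; push_cast; ring
  have hq : qB n k = 1 + ((3 * s k + 2 : ℕ) : ℝ) / 3 ^ n := by unfold qB; push_cast; ring
  have hp' : pB (n + d) k' = 1 + ((3 * s k' + 1 : ℕ) : ℝ) / 3 ^ (n + d) := by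
    unfold pB; push_cast; ring
  have hq' : qB (n + d) k' = 1 + ((3 * s k' + 2 : ℕ) : ℝ) / 3 ^ (n + d) := by
    unfold qB; push_cast; ring
  rw [hp, hq, hp', hq', rescale, rescale]
  rcases removed_middle_thirds_disjoint_nat d k k' hd with h' | h'
  · left; gcongr
  · right; gcongr

lemma alphaB_eq (n k : ℕ) : alphaB n k = pB n k + 6 * rhoB n := by
  unfold alphaB pB qB rhoB; field_simp; ring

lemma qB_eq (n k : ℕ) : qB n k = pB n k + 12 * rhoB n := by
  unfold pB qB rhoB; field_simp; ring

lemma qtB_eq (n k : ℕ) : qtB n k = pB n k + 10 * rhoB n := by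
  unfold qtB pB qB rhoB; field_simp; ring

lemma one_lt_pB (n k : ℕ) : 1 < pB n k := by
  unfold pB; have : (0 : ℝ) < (3 * s k + 1) / 3 ^ n := by positivity
  linarith

lemma rhoB_pos (n : ℕ) : 0 < rhoB n := by unfold rhoB; positivity

lemma sigB_pos (n m : ℕ) : 0 < sigB n m := by unfold sigB; positivity

lemma ten_mul_sigB_le_rhoB (n : ℕ) {m : ℕ} (hm : m ≠ 0) : 10 * sigB n m ≤ rhoB n := by
  have h2 : (2 : ℝ) ≤ 2 ^ m := by
    simpa using pow_le_pow_right₀ (by norm_num : (1 : ℝ) ≤ 2) (Nat.one_le_iff_ne_zero.mpr hm)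
  unfold sigB rhoB
  rw [mul_one_div, div_le_div_iff₀ (by positivity) (by positivity)]
  nlinarith [pow_pos (by norm_num : (0 : ℝ) < 3) n]

lemma two_mul_sigB_le (n : ℕ) {m m' : ℕ} (h : m < m') : 2 * sigB n m' ≤ sigB n m := by
  have h2 : (2 : ℝ) * 2 ^ m ≤ 2 ^ m' := by
    rw [← pow_succ']; exact pow_le_pow_right₀ (by norm_num) h
  unfold sigB
  rw [mul_one_div, div_le_div_iff₀ (by positivity) (by positivity)]
  nlinarith [pow_pos (by norm_num : (0 : ℝ) < 3) n, pow_pos (by norm_num : (0 : ℝ) < 2) m]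

/-- Indices of the generators of `Γ_B`: `kind = 0` is `N(α, -α, ρ)` (which has no `m`, hence
`m = 0`), and kinds `1, …, 4` are the four families with radius `σ(n, m)`, in the order of the
definition of `ΓB`. -/
@[ext]
structure GenIndex where
  kind : Fin 5
  n : ℕ
  k : ℕ
  m : ℕ
  one_le_n : 1 ≤ n
  k_lt : k < 2 ^ (n - 1)
  kind_eq_zero_iff : kind = 0 ↔ m = 0

namespace GenIndex

variable (i : GenIndex)

lemma fin_five_cases : ∀ t : Fin 5, t = 0 ∨ t = 1 ∨ t = 2 ∨ t = 3 ∨ t = 4 := by decide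

def isoCenter : ℝ :=
  ![alphaB i.n i.k, pB i.n i.k + 17 * sigB i.n i.m, pB i.n i.k + 13 * sigB i.n i.m,
    qtB i.n i.k - 13 * sigB i.n i.m, qtB i.n i.k - 17 * sigB i.n i.m] i.kind

def isoRadius : ℝ := if i.kind = 0 then rhoB i.n else sigB i.n i.m

/-- The generator of kind `t` maps its isometric circle onto the mirror image, in `0`, of the
isometric circle of the generator of kind `mirrorKind t`. -/
def mirrorKind : Fin 5 → Fin 5 := ![0, 2, 1, 4, 3]

lemma mirrorKind_involutive : Function.Involutive mirrorKind := by
  intro t; fin_cases t <;> rfl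

lemma mirrorKind_eq_zero_iff (t : Fin 5) : mirrorKind t = 0 ↔ t = 0 := by revert t; decide

def mirror : GenIndex :=
  { i with
    kind := mirrorKind i.kind
    kind_eq_zero_iff := (mirrorKind_eq_zero_iff _).trans i.kind_eq_zero_iff }

lemma mirror_mirror : i.mirror.mirror = i := by
  ext <;> simp [mirror, mirrorKind_involutive _]

lemma mirror_injective : Function.Injective mirror :=
  Function.LeftInverse.injective mirror_mirror

lemma isoRadius_mirror : i.mirror.isoRadius = i.isoRadius := by
  simp only [isoRadius, mirror, mirrorKind_eq_zero_iff]

lemma isoRadius_pos : 0 < i.isoRadius := by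
  unfold isoRadius rhoB sigB; split <;> positivity

lemma isoRadius_le : i.isoRadius ≤ 1 / 12 := by
  have h3 : (1 : ℝ) ≤ 3 ^ i.n := one_le_pow₀ (by norm_num)
  have h2 : (1 : ℝ) ≤ 2 ^ i.m := one_le_pow₀ (by norm_num)
  unfold isoRadius rhoB sigB
  split <;> rw [div_le_div_iff₀ (by positivity) (by norm_num)] <;> nlinarith

def gen : SL(2, ℝ) := Nmat i.isoCenter (-i.mirror.isoCenter) i.isoRadius i.isoRadius_pos.ne'

lemma pB_add_isoRadius_le_isoCenter :
    pB i.n i.k + i.isoRadius ≤ i.isoCenter ∧ i.isoCenter ≤ qB i.n i.k - i.isoRadius := by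
  obtain ⟨t, n, k, m, _, _, ht⟩ := i
  have hσ : t ≠ 0 → 10 * sigB n m ≤ rhoB n := fun h => ten_mul_sigB_le_rhoB n (ht.not.mp h)
  have := rhoB_pos n
  have := sigB_pos n m
  have := alphaB_eq n k
  have := qB_eq n k
  have := qtB_eq n k
  rcases fin_five_cases t with rfl | rfl | rfl | rfl | rfl <;>
    simp [isoCenter, isoRadius] at hσ ⊢ <;> constructor <;> linarith

lemma isoRadius_add_isoRadius_le_of_same_gap {i j : GenIndex} (hn : i.n = j.n) (hk : i.k = j.k)
    (hij : i ≠ j) : i.isoRadius + j.isoRadius ≤ |i.isoCenter - j.isoCenter| := by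
  -- Measured from `pB n k`, the disks are `[5ρ, 7ρ]` for kind 0 and `[16σ, 18σ]`, `[12σ, 14σ]`,
  -- `[10ρ - 14σ, 10ρ - 12σ]`, `[10ρ - 18σ, 10ρ - 16σ]` for kinds 1 to 4, where `10σ ≤ ρ` and
  -- `σ` at least halves when `m` increases.
  obtain ⟨t, n, k, m, _, _, ht⟩ := i
  obtain ⟨t', n', k', m', _, _, ht'⟩ := j
  dsimp only at hn hk
  subst hn hk
  have hσ : t ≠ 0 → 10 * sigB n m ≤ rhoB n := fun h => ten_mul_sigB_le_rhoB n (ht.not.mp h)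
  have hσ' : t' ≠ 0 → 10 * sigB n m' ≤ rhoB n := fun h => ten_mul_sigB_le_rhoB n (ht'.not.mp h)
  have := rhoB_pos n
  have := sigB_pos n m
  have := sigB_pos n m'
  have := alphaB_eq n k
  have := qtB_eq n k
  rw [le_abs]
  rcases lt_trichotomy m m' with hm | rfl | hm
  · have := two_mul_sigB_le n hm
    rcases fin_five_cases t with rfl | rfl | rfl | rfl | rfl <;>
      rcases fin_five_cases t' with rfl | rfl | rfl | rfl | rfl <;>
      simp [isoCenter, isoRadius] at hσ hσ' ht ht' ⊢ <;>
      first | omega | (left; linarith) | (right; linarith)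
  · rcases fin_five_cases t with rfl | rfl | rfl | rfl | rfl <;>
      rcases fin_five_cases t' with rfl | rfl | rfl | rfl | rfl <;>
      simp [isoCenter, isoRadius] at hσ hσ' ⊢ <;>
      first | exact absurd rfl hij | (left; linarith) | (right; linarith)
  · have := two_mul_sigB_le n hm
    rcases fin_five_cases t with rfl | rfl | rfl | rfl | rfl <;>
      rcases fin_five_cases t' with rfl | rfl | rfl | rfl | rfl <;>
      simp [isoCenter, isoRadius] at hσ hσ' ht ht' ⊢ <;>
      first | omega | (left; linarith) | (right; linarith)

lemma isoRadius_add_isoRadius_le_abs_isoCenter_sub {i j : GenIndex} (hij : i ≠ j) :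
    i.isoRadius + j.isoRadius ≤ |i.isoCenter - j.isoCenter| := by
  by_cases hgap : (i.n, i.k) = (j.n, j.k)
  · rw [Prod.mk.injEq] at hgap
    exact isoRadius_add_isoRadius_le_of_same_gap hgap.1 hgap.2 hij
  · have hi := i.pB_add_isoRadius_le_isoCenter
    have hj := j.pB_add_isoRadius_le_isoCenter
    rw [le_abs]
    rcases qB_le_pB_or_qB_le_pB hgap with h | h
    · right; linarith
    · left; linarith

lemma one_lt_isoCenter : 1 < i.isoCenter := by
  linarith [one_lt_pB i.n i.k, i.isoRadius_pos, i.pB_add_isoRadius_le_isoCenter.1]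

def letterCenter (x : GenIndex × Bool) : ℝ := cond x.2 x.1.isoCenter (-x.1.mirror.isoCenter)

lemma isSchottky_gen : IsSchottky gen letterCenter isoRadius where
  radius_pos := isoRadius_pos
  norm_smul_sub_mul_norm_sub i := norm_Nmat_smul_sub_mul_norm_sub _ _ _ _
  radius_add_radius_le := by
    have hpos (i j : GenIndex) : i.isoRadius + j.isoRadius < i.isoCenter + j.isoCenter := by
      linarith [i.isoRadius_le, j.isoRadius_le, i.one_lt_isoCenter, j.one_lt_isoCenter]
    rintro ⟨i, _ | _⟩ ⟨j, _ | _⟩ hne <;> simp only [letterCenter, cond_true, cond_false]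
    · have hij : i ≠ j := fun h => hne (by rw [h])
      rw [neg_sub_neg, abs_sub_comm, ← i.isoRadius_mirror, ← j.isoRadius_mirror]
      exact isoRadius_add_isoRadius_le_abs_isoCenter_sub (mirror_injective.ne hij)
    · rw [abs_sub_comm, sub_neg_eq_add,
        abs_of_pos (by linarith [i.mirror.one_lt_isoCenter, j.one_lt_isoCenter])]
      linarith [hpos i.mirror j, i.isoRadius_mirror]
    · rw [sub_neg_eq_add,
        abs_of_pos (by linarith [j.mirror.one_lt_isoCenter, i.one_lt_isoCenter])]
      linarith [hpos i j.mirror, j.isoRadius_mirror]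
    · exact isoRadius_add_isoRadius_le_abs_isoCenter_sub fun h => hne (by rw [h])

lemma closure_range_gen : Subgroup.closure (Set.range gen) = ΓB := by
  rw [ΓB]
  congr 1
  ext g
  constructor
  · rintro ⟨⟨t, n, k, m, hn, hk, ht⟩, rfl⟩
    have hm : t ≠ 0 → 1 ≤ m := fun h => Nat.one_le_iff_ne_zero.mpr (ht.not.mp h)
    rcases fin_five_cases t with rfl | rfl | rfl | rfl | rfl
    · obtain rfl := ht.mp rfl
      exact Or.inl ⟨n, k, hn, hk, by simp [gen, isoCenter, isoRadius, mirror, mirrorKind]⟩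
    all_goals
      refine Or.inr ⟨n, m, k, hn, hm (by decide), hk, ?_⟩
      simp [gen, isoCenter, isoRadius, mirror, mirrorKind]
  · rintro (⟨n, k, hn, hk, rfl⟩ | ⟨n, m, k, hn, hm, hk, rfl | rfl | rfl | rfl⟩)
    · exact ⟨⟨0, n, k, 0, hn, hk, by simp⟩, by simp [gen, isoCenter, isoRadius, mirror, mirrorKind]⟩
    · exact ⟨⟨1, n, k, m, hn, hk, iff_of_false (by decide) (by omega)⟩,
        by simp [gen, isoCenter, isoRadius, mirror, mirrorKind]⟩
    · exact ⟨⟨2, n, k, m, hn, hk, iff_of_false (by decide) (by omega)⟩,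
        by simp [gen, isoCenter, isoRadius, mirror, mirrorKind]⟩
    · exact ⟨⟨3, n, k, m, hn, hk, iff_of_false (by decide) (by omega)⟩,
        by simp [gen, isoCenter, isoRadius, mirror, mirrorKind]⟩
    · exact ⟨⟨4, n, k, m, hn, hk, iff_of_false (by decide) (by omega)⟩,
        by simp [gen, isoCenter, isoRadius, mirror, mirrorKind]⟩

instance : Infinite GenIndex :=
  Infinite.of_injective (fun m => ⟨1, 1, 0, m + 1, le_rfl, by norm_num, by simp⟩)
    fun a b h => by simpa using congrArg GenIndex.m h

end GenIndex

/-- `Γ_B` is an infinitely generated discrete subgroup of `SL(2,ℝ)`. -/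
theorem stmt_16 :
    DiscreteTopology ΓB ∧ ¬ ∃ F : Set SL(2, ℝ), F.Finite ∧ Subgroup.closure F = ΓB := by
  rw [← GenIndex.closure_range_gen]
  exact ⟨GenIndex.isSchottky_gen.discreteTopology_closure_range GenIndex.isoRadius_le
      (by norm_num),
    GenIndex.isSchottky_gen.not_exists_finite_closure_eq
      fun i => i.isoRadius_le.trans_lt (by norm_num)⟩
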